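/- arXiv:2508.12476 — 4 statements merged into one kernel-verified Lean document; each statement's English description precedes it below -/
import Mathlib

section
/- Let A be the 4th-order 2-dimensional tensor with entries a_{11 1̄1̄} = a_{22 2̄2̄} = 1, a_{11 2̄2̄} = a_{22 1̄1̄} = 2 and all other entries zero. Then for every nonzero x = (x₁,x₂) ∈ ℝ², x₁⁴ + 4 x₁² x₂² + x₂⁴ > 0, but for x = (i, 1) ∈ ℂ², the value |x₁|⁴ + 2 x₁² conj(x₂)² + 2 x₂² conj(x₁)² + |x₂|⁴ equals −2 < 0. Hence A is positive definite over ℝ but not Hermitian positive definite. -/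
open Complex Finset

/-- The conjugate polynomial associated to a `2m`-th order `n`-dimensional complex tensor. -/
noncomputable def fpoly {n m : ℕ} (A : (Fin m → Fin n) → (Fin m → Fin n) → ℂ)
    (x : Fin n → ℂ) : ℂ :=
  ∑ i : Fin m → Fin n, ∑ j : Fin m → Fin n,
    A i j * (∏ k, x (i k)) * ∏ k, (starRingEnd ℂ) (x (j k))

/-- Hermitian condition for a `2m`-th order tensor. -/
def IsHermitianTensor {n m : ℕ} (A : (Fin m → Fin n) → (Fin m → Fin n) → ℂ) : Prop :=
  ∀ i j, (starRingEnd ℂ) (A i j) = A j i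

/-- Conjugate partial-symmetric tensor. -/
def IsCPS {n m : ℕ} (A : (Fin m → Fin n) → (Fin m → Fin n) → ℂ) : Prop :=
  IsHermitianTensor A ∧
    ∀ (i j : Fin m → Fin n) (σ τ : Equiv.Perm (Fin m)), A (i ∘ σ) (j ∘ τ) = A i j

/-- `λ` is an `Ĥ`-eigenvalue of the `2(m+1)`-th order tensor `A` with eigenvector `x`. -/
noncomputable def IsHhatEigenpair {n m : ℕ}
    (A : (Fin (m+1) → Fin n) → (Fin (m+1) → Fin n) → ℂ)
    (lam : ℂ) (x : Fin n → ℂ) : Prop :=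
  x ≠ 0 ∧ ∀ p : Fin n,
    (∑ i : Fin m → Fin n, ∑ j : Fin (m+1) → Fin n,
      A (Fin.cons p i) j * (∏ k, x (i k)) * ∏ k, (starRingEnd ℂ) (x (j k)))
    = lam * (starRingEnd ℂ) (x p) * (((‖x p‖ : ℝ) : ℂ)) ^ (2*m)

/-- Diagonal entry `a_{p...p p̄...p̄}`. -/
noncomputable def diagEntry {n m : ℕ}
    (A : (Fin m → Fin n) → (Fin m → Fin n) → ℂ) (p : Fin n) : ℂ :=
  A (fun _ => p) (fun _ => p)

/-- `r_p(A)`: sum of moduli of the off-diagonal entries of the `p`-th slice. -/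
noncomputable def rOff {n m : ℕ}
    (A : (Fin (m+1) → Fin n) → (Fin (m+1) → Fin n) → ℂ) (p : Fin n) : ℝ :=
  ∑ i : Fin m → Fin n, ∑ j : Fin (m+1) → Fin n,
    if i = (fun _ => p) ∧ j = (fun _ => p) then 0
    else ‖A (Fin.cons p i) j‖

/-- `r'_p(A)`: sum over tuples in which no index equals `p`. -/
noncomputable def rPrime {n m : ℕ}
    (A : (Fin (m+1) → Fin n) → (Fin (m+1) → Fin n) → ℂ) (p : Fin n) : ℝ :=
  ∑ i : Fin m → Fin n, ∑ j : Fin (m+1) → Fin n,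
    if (∀ k, i k ≠ p) ∧ (∀ k, j k ≠ p) then ‖A (Fin.cons p i) j‖ else 0

/-- `r̂_p(A) = r_p(A) - r'_p(A)`. -/
noncomputable def rHat {n m : ℕ}
    (A : (Fin (m+1) → Fin n) → (Fin (m+1) → Fin n) → ℂ) (p : Fin n) : ℝ :=
  rOff A p - rPrime A p

/-- Entry `a_{p q...q q̄...q̄}`. -/
noncomputable def aSlice {n m : ℕ}
    (A : (Fin (m+1) → Fin n) → (Fin (m+1) → Fin n) → ℂ) (p q : Fin n) : ℂ :=
  A (Fin.cons p (fun _ => q)) (fun _ => q)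

/-- `r_p^q(A) = r_p(A) - |a_{p q...q q̄...q̄}|`. -/
noncomputable def rOffSub {n m : ℕ}
    (A : (Fin (m+1) → Fin n) → (Fin (m+1) → Fin n) → ℂ) (p q : Fin n) : ℝ :=
  rOff A p - ‖aSlice A p q‖

/-- Hermitian positive definiteness. -/
def HermitianPD {n m : ℕ} (A : (Fin m → Fin n) → (Fin m → Fin n) → ℂ) : Prop :=
  ∀ x : Fin n → ℂ, x ≠ 0 → ∃ r : ℝ, fpoly A x = r ∧ 0 < r

/-- Hermitian positive semidefiniteness. -/
def HermitianPSD {n m : ℕ} (A : (Fin m → Fin n) → (Fin m → Fin n) → ℂ) : Prop :=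
  ∀ x : Fin n → ℂ, ∃ r : ℝ, fpoly A x = r ∧ 0 ≤ r

/-- The tensor with a_{111̄1̄} = a_{222̄2̄} = 1, a_{112̄2̄} = a_{221̄1̄} = 2, and zero otherwise. -/
noncomputable def exampleTensorA : (Fin 2 → Fin 2) → (Fin 2 → Fin 2) → ℂ := fun i j =>
  if i = ![0, 0] ∧ j = ![0, 0] then 1
  else if i = ![1, 1] ∧ j = ![1, 1] then 1
  else if i = ![0, 0] ∧ j = ![1, 1] then 2
  else if i = ![1, 1] ∧ j = ![0, 0] then 2
  else 0

/-!
The Hermitian form of `exampleTensorA` is `|x₀|⁴ + 2 x₀² x̄₁² + 2 x₁² x̄₀² + |x₁|⁴`. On real vectors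
the cross terms are `4 x₀² x₁² ≥ 0`, so the form is positive; at `x = (i, 1)` we have
`x₀² x̄₁² = x₁² x̄₀² = -1`, and the cross terms `-4` outweigh the diagonal contribution `2`.
-/

open scoped ComplexConjugate

theorem Fintype.sum_finTwoArrow {ι M : Type*} [Fintype ι] [AddCommMonoid M]
    (f : (Fin 2 → ι) → M) : ∑ i, f i = ∑ a, ∑ b, f ![a, b] := by
  rw [← Fintype.sum_prod_type']
  exact (Fintype.sum_equiv (finTwoArrowEquiv ι).symm _ _ fun _ => rfl).symm

theorem fpoly_two {n : ℕ} (A : (Fin 2 → Fin n) → (Fin 2 → Fin n) → ℂ) (x : Fin n → ℂ) :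
    fpoly A x = ∑ a, ∑ b, ∑ c, ∑ d,
      A ![a, b] ![c, d] * (x a * x b) * (conj (x c) * conj (x d)) := by
  simp only [fpoly, Fintype.sum_finTwoArrow, Fin.prod_univ_two, Matrix.cons_val_zero,
    Matrix.cons_val_one]

theorem fpoly_exampleTensorA (x : Fin 2 → ℂ) :
    fpoly exampleTensorA x =
      x 0 ^ 2 * conj (x 0) ^ 2 + 2 * x 0 ^ 2 * conj (x 1) ^ 2
        + 2 * x 1 ^ 2 * conj (x 0) ^ 2 + x 1 ^ 2 * conj (x 1) ^ 2 := by
  simp [fpoly_two, Fin.sum_univ_two, exampleTensorA]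
  ring

theorem quartic_pos_of_ne_zero {a b : ℝ} (h : a ≠ 0 ∨ b ≠ 0) :
    0 < a ^ 4 + 4 * a ^ 2 * b ^ 2 + b ^ 4 := by
  rcases h with h | h <;> positivity

theorem fpoly_exampleTensorA_ofReal (x : Fin 2 → ℝ) :
    fpoly exampleTensorA (fun k => (x k : ℂ)) =
      ((x 0 ^ 4 + 4 * x 0 ^ 2 * x 1 ^ 2 + x 1 ^ 4 : ℝ) : ℂ) := by
  rw [fpoly_exampleTensorA]
  simp only [conj_ofReal]
  push_cast
  ring

theorem fpoly_exampleTensorA_I_one : fpoly exampleTensorA ![I, 1] = ((-2 : ℝ) : ℂ) := by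
  rw [fpoly_exampleTensorA]
  simp [conj_I]
  norm_num

theorem not_hermitianPD_of_fpoly_eq_ofReal_nonpos {n m : ℕ}
    {A : (Fin m → Fin n) → (Fin m → Fin n) → ℂ} {x : Fin n → ℂ} (hx : x ≠ 0) {r : ℝ}
    (hfx : fpoly A x = r) (hr : r ≤ 0) : ¬ HermitianPD A := by
  rintro hA
  obtain ⟨s, hs, hs_pos⟩ := hA x hx
  rw [hfx, ofReal_inj] at hs
  linarith

theorem pd_over_R_but_not_hermitianPD :
    (∀ x : Fin 2 → ℝ, x ≠ 0 → 0 < (x 0)^4 + 4 * (x 0)^2 * (x 1)^2 + (x 1)^4) ∧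
    (((‖Complex.I‖ : ℝ) : ℂ)^4 + 2 * Complex.I^2 * ((starRingEnd ℂ) 1)^2
        + 2 * (1 : ℂ)^2 * ((starRingEnd ℂ) Complex.I)^2 + ((‖(1 : ℂ)‖ : ℝ) : ℂ)^4
      = -2) ∧
    (∀ x : Fin 2 → ℝ, x ≠ 0 →
        ∃ r : ℝ, fpoly exampleTensorA (fun k => (x k : ℂ)) = (r : ℂ) ∧ 0 < r) ∧
    ¬ HermitianPD exampleTensorA := by
  have quartic_pos (x : Fin 2 → ℝ) (hx : x ≠ 0) :
      0 < x 0 ^ 4 + 4 * x 0 ^ 2 * x 1 ^ 2 + x 1 ^ 4 :=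
    quartic_pos_of_ne_zero (by simpa [funext_iff, Fin.forall_fin_two, imp_iff_not_or] using hx)
  refine ⟨quartic_pos, ?_, fun x hx => ⟨_, fpoly_exampleTensorA_ofReal x, quartic_pos x hx⟩, ?_⟩
  · simp [conj_I]
    norm_num
  · exact not_hermitianPD_of_fpoly_eq_ofReal_nonpos (by simp [funext_iff, Fin.forall_fin_two])
      fpoly_exampleTensorA_I_one (by norm_num)
end

section
/- Let A be a 2m-th order n-dimensional complex tensor and λ an Ĥ-eigenvalue of A. Then λ lies in the Geršgorin-type set K_ger(A) = ⋃_{i=1}^n { z ∈ ℂ : |z − a_{i...i ī...ī}| ≤ r_i(A) }, where r_i(A) = Σ_{(i₂...i_m j₁...j_m) ≠ (i...i)} |a_{i i₂...i_m j̄₁...j̄_m}|. -/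
open Complex Finset

/-!
Take `p` with `|x_p|` maximal. In the `p`-th eigen-equation the diagonal term is
`a_{p…p p̄…p̄} conj(x_p) |x_p|^{2m}`, while every other monomial has modulus at most
`|x_p|^{2m+1}`; moving the diagonal term to the left and taking moduli gives the bound after
dividing by `|x_p|^{2m+1} > 0`.
-/

theorem norm_le_sum_norm_of_mul_eq_sum {ι 𝕜 : Type*} [NormedDivisionRing 𝕜] {s : Finset ι}
    {a t : ι → 𝕜} {c w : 𝕜} (hw : w ≠ 0) (ht : ∀ i ∈ s, ‖t i‖ ≤ ‖w‖)
    (h : c * w = ∑ i ∈ s, a i * t i) : ‖c‖ ≤ ∑ i ∈ s, ‖a i‖ := by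
  refine le_of_mul_le_mul_right ?_ (norm_pos_iff.mpr hw)
  calc ‖c‖ * ‖w‖ = ‖∑ i ∈ s, a i * t i‖ := by rw [← h, norm_mul]
    _ ≤ ∑ i ∈ s, ‖a i‖ * ‖t i‖ := (norm_sum_le _ _).trans_eq (by simp_rw [norm_mul])
    _ ≤ (∑ i ∈ s, ‖a i‖) * ‖w‖ := by
      rw [Finset.sum_mul]
      exact Finset.sum_le_sum fun i hi => mul_le_mul_of_nonneg_left (ht i hi) (norm_nonneg _)

theorem exists_norm_le_norm_of_ne_zero {ι E : Type*} [Finite ι] [NormedAddCommGroup E]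
    {x : ι → E} (hx : x ≠ 0) : ∃ p, 0 < ‖x p‖ ∧ ∀ q, ‖x q‖ ≤ ‖x p‖ := by
  obtain ⟨q, hq⟩ := Function.ne_iff.mp hx
  have : Nonempty ι := ⟨q⟩
  obtain ⟨p, hp⟩ := Finite.exists_max fun q => ‖x q‖
  exact ⟨p, (norm_pos_iff.mpr hq).trans_le (hp q), hp⟩

noncomputable def conjMonomial {n a b : ℕ} (x : Fin n → ℂ) (i : Fin a → Fin n)
    (j : Fin b → Fin n) : ℂ :=
  (∏ k, x (i k)) * ∏ k, (starRingEnd ℂ) (x (j k))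

theorem norm_conjMonomial_le {n a b : ℕ} {x : Fin n → ℂ} {M : ℝ} (hM : ∀ q, ‖x q‖ ≤ M)
    (i : Fin a → Fin n) (j : Fin b → Fin n) : ‖conjMonomial x i j‖ ≤ M ^ (a + b) := by
  have hprod : ∀ {c : ℕ} (y : Fin c → ℂ), (∀ k, ‖y k‖ ≤ M) → ‖∏ k, y k‖ ≤ M ^ c := fun y hy =>
    (norm_prod _ _).trans_le <| (Finset.prod_le_prod (fun k _ => norm_nonneg (y k))
      fun k _ => hy k).trans_eq (by simp)
  have hx := hprod _ fun k => hM (i k)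
  have hxbar := hprod _ fun k => (Complex.norm_conj _).trans_le (hM (j k))
  rw [conjMonomial, norm_mul, pow_add]
  exact mul_le_mul hx hxbar (norm_nonneg _) ((norm_nonneg _).trans hx)

theorem conjMonomial_const {n m : ℕ} (x : Fin n → ℂ) (p : Fin n) :
    conjMonomial x (fun _ : Fin m => p) (fun _ : Fin (m + 1) => p)
      = (starRingEnd ℂ) (x p) * ((‖x p‖ : ℂ)) ^ (2 * m) := by
  rw [conjMonomial, Finset.prod_const, Finset.prod_const, Finset.card_univ, Finset.card_univ,
    Fintype.card_fin, Fintype.card_fin, pow_mul, ← Complex.mul_conj']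
  ring

theorem isHhatEigenpair_iff {n m : ℕ} (A : (Fin (m+1) → Fin n) → (Fin (m+1) → Fin n) → ℂ)
    (lam : ℂ) (x : Fin n → ℂ) :
    IsHhatEigenpair A lam x ↔ x ≠ 0 ∧ ∀ p : Fin n,
      ∑ ij : (Fin m → Fin n) × (Fin (m+1) → Fin n),
          A (Fin.cons p ij.1) ij.2 * conjMonomial x ij.1 ij.2
        = lam * ((starRingEnd ℂ) (x p) * ((‖x p‖ : ℂ)) ^ (2 * m)) := by
  simp only [IsHhatEigenpair, Fintype.sum_prod_type, conjMonomial, mul_assoc]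

theorem Fin.cons_const {α : Type*} {m : ℕ} (p : α) :
    (Fin.cons p (fun _ : Fin m => p) : Fin (m + 1) → α) = fun _ => p :=
  funext fun k => Fin.cases rfl (fun _ => rfl) k

theorem rOff_eq_sum_erase {n m : ℕ} (A : (Fin (m+1) → Fin n) → (Fin (m+1) → Fin n) → ℂ)
    (p : Fin n) :
    rOff A p = ∑ ij ∈ Finset.univ.erase ((fun _ => p), (fun _ => p)),
      ‖A (Fin.cons p ij.1) ij.2‖ := by
  rw [rOff, ← Fintype.sum_prod_type', ← Finset.filter_ne', Finset.sum_filter]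
  refine Finset.sum_congr rfl fun ij _ => ?_
  simp only [ne_eq, Prod.ext_iff, ite_not]

theorem hhat_eigenvalue_in_gershgorin {n m : ℕ}
    (A : (Fin (m+1) → Fin n) → (Fin (m+1) → Fin n) → ℂ)
    (lam : ℂ) (x : Fin n → ℂ) (h : IsHhatEigenpair A lam x) :
    ∃ p : Fin n, ‖lam - diagEntry A p‖ ≤ rOff A p := by
  obtain ⟨hx, heq⟩ := (isHhatEigenpair_iff A lam x).mp h
  obtain ⟨p, hpos, hmax⟩ := exists_norm_le_norm_of_ne_zero hx
  refine ⟨p, ?_⟩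
  set d : (Fin m → Fin n) × (Fin (m+1) → Fin n) := ((fun _ => p), (fun _ => p))
  set w := (starRingEnd ℂ) (x p) * ((‖x p‖ : ℂ)) ^ (2 * m)
  have hw : w ≠ 0 := mul_ne_zero (by simpa using norm_pos_iff.mp hpos)
    (pow_ne_zero _ (Complex.ofReal_ne_zero.mpr hpos.ne'))
  have hdiag : A (Fin.cons p d.1) d.2 * conjMonomial x d.1 d.2 = diagEntry A p * w := by
    rw [conjMonomial_const, Fin.cons_const, diagEntry]
  have hsplit : (lam - diagEntry A p) * w
      = ∑ ij ∈ Finset.univ.erase d, A (Fin.cons p ij.1) ij.2 * conjMonomial x ij.1 ij.2 := by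
    rw [sub_mul, ← heq p, ← Finset.add_sum_erase _ _ (Finset.mem_univ d), hdiag,
      add_sub_cancel_left]
  have hbound : ∀ ij ∈ Finset.univ.erase d, ‖conjMonomial x ij.1 ij.2‖ ≤ ‖w‖ := fun ij _ => by
    have hnorm : ‖w‖ = ‖x p‖ ^ (m + (m + 1)) := by
      rw [norm_mul, Complex.norm_conj, norm_pow, Complex.norm_real, norm_norm]; ring
    exact hnorm ▸ norm_conjMonomial_le hmax ij.1 ij.2
  rw [rOff_eq_sum_erase]
  exact norm_le_sum_norm_of_mul_eq_sum hw hbound hsplit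
end

section
/- Let A be a 2m-th order n-dimensional complex tensor and λ an Ĥ-eigenvalue of A. Then there exist indices i ≠ j such that (|λ − a_{i...i ī...ī}| − r_i^j(A)) · |λ − a_{j...j j̄...j̄}| ≤ |a_{i j...j j̄...j̄}| · r_j(A), where r_i^j(A) = r_i(A) − |a_{i j...j j̄...j̄}| and r_i(A) is the sum of moduli of off-diagonal entries of the i-th slice. Hence σ_h(A) ⊆ K_llk(A). -/
open Complex Finset

/-!
Take `p` with `|x_p|` maximal and any `q ≠ p`, and bound every monomial of the eigen-equations by
`|x_p|^{2m+1}` except `a_{pq…q} x_q^m x̄_q^{m+1}`, which is kept exact. The `p`-th equation gives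
`(|λ - a_{p…p}| - r_p^q) |x_p|^{2m+1} ≤ |a_{pq…q}| |x_q|^{2m+1}` and the `q`-th gives
`|λ - a_{q…q}| |x_q|^{2m+1} ≤ r_q |x_p|^{2m+1}`; multiplying the two eliminates `|x_q|`.
-/

open ComplexConjugate

section DoubleSum

variable {α β : Type*} [Fintype α] [Fintype β]

theorem sum_sum_ite_eq_sub {M : Type*} [AddCommGroup M] [DecidableEq α] [DecidableEq β]
    (f : α → β → M) (i₀ : α) (j₀ : β) :
    ∑ i, ∑ j, (if i = i₀ ∧ j = j₀ then 0 else f i j) = ∑ i, ∑ j, f i j - f i₀ j₀ := by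
  have hite : ∀ i j, (if i = i₀ ∧ j = j₀ then 0 else f i j)
      = f i j - if i = i₀ then (if j = j₀ then f i j else 0) else 0 := by
    intro i j
    split_ifs <;> simp_all
  simp [hite, sum_sub_distrib]

theorem norm_sum_sum_le_mul {E : Type*} [SeminormedAddCommGroup E] {f : α → β → E}
    {w : α → β → ℝ} {C : ℝ} (h : ∀ i j, ‖f i j‖ ≤ w i j * C) :
    ‖∑ i, ∑ j, f i j‖ ≤ (∑ i, ∑ j, w i j) * C := by
  simp only [sum_mul]
  exact norm_sum_le_of_le _ fun i _ => norm_sum_le_of_le _ fun j _ => h i j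

end DoubleSum

theorem mul_le_mul_of_cross_bounds {D E a R M N : ℝ} (hM : 0 < M) (ha : 0 ≤ a) (hE : 0 ≤ E)
    (h₁ : D * M ≤ a * N) (h₂ : E * N ≤ R * M) : D * E ≤ a * R := by
  refine le_of_mul_le_mul_right ?_ hM
  calc D * E * M = D * M * E := by ring
    _ ≤ a * N * E := mul_le_mul_of_nonneg_right h₁ hE
    _ = a * (E * N) := by ring
    _ ≤ a * (R * M) := mul_le_mul_of_nonneg_left h₂ ha
    _ = a * R * M := by ring

theorem pow_mul_conj_pow_succ (z : ℂ) (m : ℕ) :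
    z ^ m * conj z ^ (m + 1) = conj z * (‖z‖ : ℂ) ^ (2 * m) := by
  rw [pow_mul, ← Complex.mul_conj', mul_pow]
  ring

theorem norm_conj_mul_norm_pow (z : ℂ) (m : ℕ) :
    ‖conj z * (‖z‖ : ℂ) ^ (2 * m)‖ = ‖z‖ ^ (2 * m + 1) := by
  rw [norm_mul, norm_pow, Complex.norm_conj, Complex.norm_real, norm_norm, pow_succ, mul_comm]

theorem Fin.cons_const_self {n m : ℕ} (p : Fin n) :
    (Fin.cons p (fun _ => p) : Fin (m + 1) → Fin n) = fun _ => p :=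
  funext fun k => Fin.cases rfl (fun _ => rfl) k

section Slice

variable {n m : ℕ} (A : (Fin (m + 1) → Fin n) → (Fin (m + 1) → Fin n) → ℂ) (x : Fin n → ℂ)

noncomputable def sliceTerm (r : Fin n) (i : Fin m → Fin n) (j : Fin (m + 1) → Fin n) : ℂ :=
  A (Fin.cons r i) j * (∏ k, x (i k)) * ∏ k, conj (x (j k))

noncomputable def offDiagSliceSum (r : Fin n) : ℂ :=
  ∑ i, ∑ j, if i = (fun _ => r) ∧ j = (fun _ => r) then 0 else sliceTerm A x r i j

theorem sliceTerm_const (r q : Fin n) :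
    sliceTerm A x r (fun _ => q) (fun _ => q)
      = A (Fin.cons r fun _ => q) (fun _ => q) * (conj (x q) * (‖x q‖ : ℂ) ^ (2 * m)) := by
  rw [sliceTerm, prod_const, prod_const, card_univ, card_univ, Fintype.card_fin,
    Fintype.card_fin, ← pow_mul_conj_pow_succ]
  ring

theorem norm_sliceTerm_le {M : ℝ} (hM : ∀ k, ‖x k‖ ≤ M) (r : Fin n) (i : Fin m → Fin n)
    (j : Fin (m + 1) → Fin n) :
    ‖sliceTerm A x r i j‖ ≤ ‖A (Fin.cons r i) j‖ * M ^ (2 * m + 1) := by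
  have hprod : ∀ {l : ℕ} (g : Fin l → Fin n), ∏ k, ‖x (g k)‖ ≤ M ^ l := fun g =>
    (prod_le_prod (fun _ _ => norm_nonneg _) fun k _ => hM (g k)).trans_eq (by simp)
  rw [sliceTerm, norm_mul, norm_mul, norm_prod, norm_prod, mul_assoc, two_mul, add_assoc,
    pow_add]
  simp only [Complex.norm_conj]
  gcongr
  · exact pow_nonneg ((norm_nonneg _).trans (hM r)) m
  · exact hprod i
  · exact hprod j

theorem norm_offDiagSliceSum_le {M : ℝ} (hM : ∀ k, ‖x k‖ ≤ M) (r : Fin n) :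
    ‖offDiagSliceSum A x r‖ ≤ rOff A r * M ^ (2 * m + 1) := by
  refine norm_sum_sum_le_mul fun i j => ?_
  split_ifs
  · simp
  · exact norm_sliceTerm_le A x hM r i j

theorem rOffSub_eq_sum (r q : Fin n) (hqr : q ≠ r) :
    rOffSub A r q = ∑ i, ∑ j, if i = (fun _ => q) ∧ j = (fun _ => q) then 0 else
      if i = (fun _ => r) ∧ j = (fun _ => r) then 0 else ‖A (Fin.cons r i) j‖ := by
  rw [sum_sum_ite_eq_sub, if_neg fun h => hqr (congrFun h.2 0)]
  rfl

theorem norm_offDiagSliceSum_le_aSlice {M : ℝ} (hM : ∀ k, ‖x k‖ ≤ M) (r q : Fin n)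
    (hqr : q ≠ r) :
    ‖offDiagSliceSum A x r‖
      ≤ ‖aSlice A r q‖ * ‖x q‖ ^ (2 * m + 1) + rOffSub A r q * M ^ (2 * m + 1) := by
  have hsplit := sum_sum_ite_eq_sub
    (fun i j => if i = (fun _ => r) ∧ j = (fun _ => r) then 0 else sliceTerm A x r i j)
    (fun _ => q) (fun _ => q)
  rw [if_neg fun h => hqr (congrFun h.2 0), eq_sub_iff_add_eq] at hsplit
  rw [offDiagSliceSum, ← hsplit, add_comm, rOffSub_eq_sum A r q hqr]
  refine (norm_add_le _ _).trans (add_le_add ?_ (norm_sum_sum_le_mul fun i j => ?_))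
  · rw [sliceTerm_const, norm_mul, norm_conj_mul_norm_pow, aSlice]
  · split_ifs
    · simp
    · simp
    · exact norm_sliceTerm_le A x hM r i j

variable {A x} {lam : ℂ}

theorem IsHhatEigenpair.sub_diagEntry_mul_eq (h : IsHhatEigenpair A lam x) (r : Fin n) :
    (lam - diagEntry A r) * (conj (x r) * (‖x r‖ : ℂ) ^ (2 * m)) = offDiagSliceSum A x r := by
  have heq : ∑ i, ∑ j, sliceTerm A x r i j = lam * conj (x r) * (‖x r‖ : ℂ) ^ (2 * m) := h.2 r
  rw [offDiagSliceSum, sum_sum_ite_eq_sub, heq, sliceTerm_const, Fin.cons_const_self, diagEntry]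
  ring

theorem IsHhatEigenpair.norm_sub_diagEntry_mul_eq (h : IsHhatEigenpair A lam x) (r : Fin n) :
    ‖lam - diagEntry A r‖ * ‖x r‖ ^ (2 * m + 1) = ‖offDiagSliceSum A x r‖ := by
  rw [← h.sub_diagEntry_mul_eq, norm_mul, norm_conj_mul_norm_pow]

end Slice

theorem hhat_eigenvalue_in_llk {n m : ℕ} (hn : 1 < n)
    (A : (Fin (m+1) → Fin n) → (Fin (m+1) → Fin n) → ℂ)
    (lam : ℂ) (x : Fin n → ℂ) (h : IsHhatEigenpair A lam x) :
    ∃ p q : Fin n, p ≠ q ∧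
      (‖lam - diagEntry A p‖ - rOffSub A p q) * ‖lam - diagEntry A q‖
        ≤ ‖aSlice A p q‖ * rOff A q := by
  have : Nontrivial (Fin n) := Fin.nontrivial_iff_two_le.mpr hn
  obtain ⟨p, hmax⟩ := Finite.exists_max fun k => ‖x k‖
  obtain ⟨q, hqp⟩ := exists_ne p
  have hxp : 0 < ‖x p‖ := by
    obtain ⟨k, hk⟩ := Function.ne_iff.mp h.1
    exact (norm_pos_iff.mpr hk).trans_le (hmax k)
  have hp := (h.norm_sub_diagEntry_mul_eq p).trans_le
    (norm_offDiagSliceSum_le_aSlice A x hmax p q hqp)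
  have hq := (h.norm_sub_diagEntry_mul_eq q).trans_le (norm_offDiagSliceSum_le A x hmax q)
  refine ⟨p, q, hqp.symm, mul_le_mul_of_cross_bounds (pow_pos hxp (2 * m + 1)) (norm_nonneg _)
    (norm_nonneg _) ?_ hq⟩
  linarith [sub_mul ‖lam - diagEntry A p‖ (rOffSub A p q) (‖x p‖ ^ (2 * m + 1))]
end

section
/- Let A be a 2m-th order n-dimensional Hermitian tensor that is conjugate partial-symmetric (CPS). If A is strictly diagonally dominated, i.e. for every i, a_{i...iī...ī} > r_i(A) where r_i(A) is the sum of moduli of all off-diagonal entries of the i-th slice, then A is Hermitian positive definite: f(A)(x) > 0 for every nonzero x ∈ ℂⁿ. -/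
open Complex Finset

/-!
For `x ≠ 0`, `f(A)(x)` is real because `A` is Hermitian. Its diagonal terms are
`a_{q…q q̄…q̄} |x_q|^{2(m+1)}`; every other term is bounded below by minus its modulus
`|a_{i j̄}| gᵢ gⱼ`, where `gᵢ = |x_{i₁}| ⋯ |x_{i_{m+1}}|`. By AM-GM,
`gᵢ gⱼ ≤ (gᵢ² + gⱼ²) / 2` and `gᵢ² ≤ (∑ₖ |x_{iₖ}|^{2(m+1)}) / (m+1)`. Since `|a_{i j̄}|` is invariant
under permuting `i` and under swapping `i` and `j`, moving any index `iₖ` to the front turns the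
off-diagonal sum into `∑_q r_q(A) |x_q|^{2(m+1)}`. Hence
`f(A)(x) ≥ ∑_q (a_{q…q q̄…q̄} - r_q(A)) |x_q|^{2(m+1)} > 0`.
-/

theorem Real.prod_le_sum_pow_card_div_card {ι : Type*} [Fintype ι] [Nonempty ι] (a : ι → ℝ)
    (ha : ∀ t, 0 ≤ a t) :
    ∏ t, a t ≤ (∑ t, a t ^ Fintype.card ι) / Fintype.card ι := by
  set N := Fintype.card ι
  have hN : (N : ℝ) ≠ 0 := by positivity
  have amgm := Real.geom_mean_le_arith_mean_weighted univ (fun _ => (N : ℝ)⁻¹)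
    (fun t => a t ^ N) (fun _ _ => by positivity) (by simp [N, hN])
    (fun t _ => pow_nonneg (ha t) N)
  have root : ∀ t, (a t ^ N) ^ (N : ℝ)⁻¹ = a t := fun t =>
    Real.pow_rpow_inv_natCast (ha t) (Nat.cast_ne_zero.mp hN)
  simpa [root, ← mul_sum, div_eq_inv_mul] using amgm

section OffDiagonal

variable {κ : Type*} {n : ℕ}

def IsDiagonalPair (i j : κ → Fin n) : Prop :=
  ∃ q, i = (fun _ => q) ∧ j = (fun _ => q)

instance [Fintype κ] (i j : κ → Fin n) : Decidable (IsDiagonalPair i j) := by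
  unfold IsDiagonalPair; infer_instance

theorem isDiagonalPair_comm {i j : κ → Fin n} : IsDiagonalPair i j ↔ IsDiagonalPair j i :=
  exists_congr fun _ => and_comm

theorem isDiagonalPair_comp_perm_left {i j : κ → Fin n} (σ : Equiv.Perm κ) :
    IsDiagonalPair (i ∘ σ) j ↔ IsDiagonalPair i j := by
  refine exists_congr fun q => and_congr_left' ⟨fun h => ?_, fun h => by subst h; rfl⟩
  simpa [Function.comp_def] using congrArg (· ∘ σ.symm) h

theorem isDiagonalPair_cons_iff {m : ℕ} {q : Fin n} {i : Fin m → Fin n}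
    {j : Fin (m + 1) → Fin n} :
    IsDiagonalPair (Fin.cons q i : Fin (m + 1) → Fin n) j ↔
      i = (fun _ => q) ∧ j = (fun _ => q) := by
  constructor
  · rintro ⟨q', hi, rfl⟩
    obtain rfl : q = q' := by simpa using congrFun hi 0
    exact ⟨funext fun t => by simpa using congrFun hi t.succ, rfl⟩
  · rintro ⟨rfl, rfl⟩
    exact ⟨q, funext fun t => Fin.cases rfl (fun _ => rfl) t, rfl⟩

theorem sum_ite_isDiagonalPair [Fintype κ] [DecidableEq κ] [Nonempty κ] {M : Type*}
    [AddCommMonoid M] (c : (κ → Fin n) → (κ → Fin n) → M) :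
    ∑ i, ∑ j, (if IsDiagonalPair i j then c i j else 0) =
      ∑ q, c (fun _ => q) (fun _ => q) := by
  let diag : Fin n → (κ → Fin n) × (κ → Fin n) := fun q => (fun _ => q, fun _ => q)
  have diag_inj : Function.Injective diag :=
    fun q q' h => congrFun (congrArg Prod.fst h) (Classical.arbitrary κ)
  have filter_eq : univ.filter (fun p => IsDiagonalPair p.1 p.2) = univ.image diag := by
    ext ⟨i, j⟩
    rw [mem_filter_univ, mem_image]
    simp [diag, IsDiagonalPair, eq_comm]
  rw [← Fintype.sum_prod_type', ← sum_filter, filter_eq, sum_image fun q _ q' _ h => diag_inj h]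

noncomputable def offDiagNorm [Fintype κ] (A : (κ → Fin n) → (κ → Fin n) → ℂ)
    (i j : κ → Fin n) : ℝ :=
  if IsDiagonalPair i j then 0 else ‖A i j‖

variable [Fintype κ] {A : (κ → Fin n) → (κ → Fin n) → ℂ}

theorem offDiagNorm_nonneg (i j : κ → Fin n) : 0 ≤ offDiagNorm A i j := by
  unfold offDiagNorm; split_ifs <;> positivity

theorem offDiagNorm_comm (hA : ∀ i j, ‖A j i‖ = ‖A i j‖) (i j : κ → Fin n) :
    offDiagNorm A j i = offDiagNorm A i j := by
  simp only [offDiagNorm, hA i j, isDiagonalPair_comm (i := j)]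

theorem offDiagNorm_comp_perm_left (hA : ∀ i j (σ : Equiv.Perm κ), ‖A (i ∘ σ) j‖ = ‖A i j‖)
    (i j : κ → Fin n) (σ : Equiv.Perm κ) :
    offDiagNorm A (i ∘ σ) j = offDiagNorm A i j := by
  simp only [offDiagNorm, hA i j σ, isDiagonalPair_comp_perm_left]

end OffDiagonal

section Slices

variable {n m : ℕ} {A : (Fin (m + 1) → Fin n) → (Fin (m + 1) → Fin n) → ℂ}

theorem rOff_eq_sum_offDiagNorm (p : Fin n) :
    rOff A p = ∑ i : Fin m → Fin n, ∑ j, offDiagNorm A (Fin.cons p i) j := by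
  simp only [rOff, offDiagNorm, isDiagonalPair_cons_iff]

theorem sum_offDiagNorm_mul_apply_zero (w : Fin n → ℝ) :
    ∑ i, ∑ j, offDiagNorm A i j * w (i 0) = ∑ p, rOff A p * w p := by
  rw [← Fintype.sum_equiv (Fin.consEquiv fun _ => Fin n) _ _ fun _ => rfl, Fintype.sum_prod_type]
  simp [rOff_eq_sum_offDiagNorm, sum_mul, Fin.consEquiv]

variable (hperm : ∀ i j (σ : Equiv.Perm (Fin (m + 1))), ‖A (i ∘ σ) j‖ = ‖A i j‖)
include hperm

theorem sum_offDiagNorm_mul_apply (w : Fin n → ℝ) (k : Fin (m + 1)) :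
    ∑ i, ∑ j, offDiagNorm A i j * w (i k) = ∑ p, rOff A p * w p := by
  rw [← sum_offDiagNorm_mul_apply_zero]
  -- substitute `i ∘ swap 0 k` for `i`: this moves the index `k` to the front
  refine Fintype.sum_equiv (Equiv.arrowCongr (Equiv.swap 0 k) (Equiv.refl _)) _ _
    fun i => sum_congr rfl fun j _ => ?_
  show _ = offDiagNorm A (i ∘ Equiv.swap 0 k) j * w (i (Equiv.swap 0 k 0))
  rw [offDiagNorm_comp_perm_left hperm, Equiv.swap_apply_left]

theorem sum_offDiagNorm_mul_prod_le {w : Fin n → ℝ} (hw : ∀ p, 0 ≤ w p) :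
    ∑ i, ∑ j, offDiagNorm A i j * ∏ k, w (i k) ≤ ∑ p, rOff A p * w p ^ (m + 1) := calc
  _ ≤ ∑ i, ∑ j, offDiagNorm A i j * ((∑ k, w (i k) ^ (m + 1)) / (m + 1)) := by
    gcongr with i _ j _
    · exact offDiagNorm_nonneg i j
    · simpa using Real.prod_le_sum_pow_card_div_card (fun k => w (i k)) fun k => hw _
  _ = (∑ k, ∑ i, ∑ j, offDiagNorm A i j * w (i k) ^ (m + 1)) / (m + 1) := by
    simp only [mul_div_assoc', mul_sum, sum_div]
    conv_rhs => rw [sum_comm]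
    exact sum_congr rfl fun i _ => sum_comm
  _ = ∑ p, rOff A p * w p ^ (m + 1) := by
    simp only [sum_offDiagNorm_mul_apply hperm (fun p => w p ^ (m + 1)), sum_const, card_univ,
      Fintype.card_fin, nsmul_eq_mul]
    field_simp
    push_cast
    ring

theorem sum_offDiagNorm_mul_prod_mul_prod_le (hsymm : ∀ i j, ‖A j i‖ = ‖A i j‖)
    (t : Fin n → ℝ) :
    ∑ i, ∑ j, offDiagNorm A i j * ((∏ k, t (i k)) * ∏ k, t (j k)) ≤
      ∑ p, rOff A p * t p ^ (2 * (m + 1)) := by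
  have left : ∑ i, ∑ j, offDiagNorm A i j * (∏ k, t (i k)) ^ 2 ≤
      ∑ p, rOff A p * t p ^ (2 * (m + 1)) := by
    simpa [← prod_pow, ← pow_mul] using
      sum_offDiagNorm_mul_prod_le hperm fun p => sq_nonneg (t p)
  have right : ∑ i, ∑ j, offDiagNorm A i j * (∏ k, t (j k)) ^ 2 ≤
      ∑ p, rOff A p * t p ^ (2 * (m + 1)) := by
    rw [sum_comm]
    simpa only [offDiagNorm_comm hsymm] using left
  calc _ ≤ ∑ i, ∑ j, offDiagNorm A i j * (((∏ k, t (i k)) ^ 2 + (∏ k, t (j k)) ^ 2) / 2) := by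
        gcongr with i _ j _
        · exact offDiagNorm_nonneg i j
        · linarith [two_mul_le_add_sq (∏ k, t (i k)) (∏ k, t (j k))]
    _ = (∑ i, ∑ j, offDiagNorm A i j * (∏ k, t (i k)) ^ 2 +
          ∑ i, ∑ j, offDiagNorm A i j * (∏ k, t (j k)) ^ 2) / 2 := by
        simp only [mul_div_assoc', mul_add, add_div, sum_add_distrib, sum_div]
    _ ≤ _ := by linarith

end Slices

theorem IsHermitianTensor.conj_fpoly {n m : ℕ} {A : (Fin m → Fin n) → (Fin m → Fin n) → ℂ}
    (hA : IsHermitianTensor A) (x : Fin n → ℂ) :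
    starRingEnd ℂ (fpoly A x) = fpoly A x := by
  have conj_entry : ∀ i j, starRingEnd ℂ (A i j) = A j i := hA
  conv_lhs => rw [fpoly, sum_comm]
  simp only [fpoly, map_sum, map_mul, map_prod, conj_entry, Complex.conj_conj]
  exact sum_congr rfl fun i _ => sum_congr rfl fun j _ => by ring

theorem IsCPS.norm_comp_perm_left {n m : ℕ} {A : (Fin m → Fin n) → (Fin m → Fin n) → ℂ}
    (hA : IsCPS A) (i j : Fin m → Fin n) (σ : Equiv.Perm (Fin m)) :
    ‖A (i ∘ σ) j‖ = ‖A i j‖ := by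
  rw [← hA.2 i j σ 1, Equiv.Perm.coe_one, Function.comp_id]

theorem IsHermitianTensor.norm_comm {n m : ℕ} {A : (Fin m → Fin n) → (Fin m → Fin n) → ℂ}
    (hA : IsHermitianTensor A) (i j : Fin m → Fin n) : ‖A j i‖ = ‖A i j‖ := by
  rw [← hA i j, Complex.norm_conj]

section Fpoly

variable {n m : ℕ} (A : (Fin (m + 1) → Fin n) → (Fin (m + 1) → Fin n) → ℂ) (x : Fin n → ℂ)

theorem fpoly_term_diag (q : Fin n) :
    A (fun _ => q) (fun _ => q) * (∏ _k : Fin (m + 1), x q) *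
        ∏ _k : Fin (m + 1), starRingEnd ℂ (x q) =
      diagEntry A q * (‖x q‖ ^ (2 * (m + 1)) : ℝ) := by
  rw [mul_assoc, prod_const, prod_const, ← mul_pow, Complex.mul_conj', ← pow_mul, card_univ,
    Fintype.card_fin, diagEntry]
  push_cast
  rfl

theorem norm_fpoly_term (i j : Fin (m + 1) → Fin n) :
    ‖A i j * (∏ k, x (i k)) * ∏ k, starRingEnd ℂ (x (j k))‖ =
      ‖A i j‖ * ((∏ k, ‖x (i k)‖) * ∏ k, ‖x (j k)‖) := by
  simp only [norm_mul, norm_prod, Complex.norm_conj, mul_assoc]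

theorem sum_diag_sub_sum_offDiagNorm_le_re_fpoly :
    ∑ q, (diagEntry A q).re * ‖x q‖ ^ (2 * (m + 1)) -
        ∑ i, ∑ j, offDiagNorm A i j * ((∏ k, ‖x (i k)‖) * ∏ k, ‖x (j k)‖) ≤
      (fpoly A x).re := by
  set T : (Fin (m + 1) → Fin n) → (Fin (m + 1) → Fin n) → ℂ :=
    fun i j => A i j * (∏ k, x (i k)) * ∏ k, starRingEnd ℂ (x (j k))
  have diag_sum : ∑ q, (diagEntry A q).re * ‖x q‖ ^ (2 * (m + 1)) =
      ∑ i, ∑ j, if IsDiagonalPair i j then (T i j).re else 0 := by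
    rw [sum_ite_isDiagonalPair (fun i j => (T i j).re)]
    simp only [T, fpoly_term_diag, Complex.re_mul_ofReal]
  have termwise (i j) : (if IsDiagonalPair i j then (T i j).re else 0) -
      offDiagNorm A i j * ((∏ k, ‖x (i k)‖) * ∏ k, ‖x (j k)‖) ≤ (T i j).re := by
    by_cases h : IsDiagonalPair i j
    · simp [offDiagNorm, h]
    · rw [if_neg h, offDiagNorm, if_neg h, ← norm_fpoly_term, zero_sub]
      exact (abs_le.mp (Complex.abs_re_le_norm (T i j))).1
  rw [diag_sum, fpoly, Complex.re_sum, ← sum_sub_distrib]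
  refine sum_le_sum fun i _ => ?_
  rw [Complex.re_sum, ← sum_sub_distrib]
  exact sum_le_sum fun j _ => termwise i j

end Fpoly

theorem strictly_diag_dominated_cps_is_hermitianPD {n m : ℕ}
    (A : (Fin (m+1) → Fin n) → (Fin (m+1) → Fin n) → ℂ)
    (hcps : IsCPS A)
    (hdd : ∀ p : Fin n, rOff A p < (diagEntry A p).re) :
    HermitianPD A := by
  intro x hx
  refine ⟨(fpoly A x).re, (Complex.conj_eq_iff_re.mp (hcps.1.conj_fpoly x)).symm, ?_⟩
  obtain ⟨q, hq⟩ : ∃ q, x q ≠ 0 := by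
    by_contra! h
    exact hx (funext h)
  calc 0 < ∑ p, ((diagEntry A p).re - rOff A p) * ‖x p‖ ^ (2 * (m + 1)) :=
        sum_pos' (fun p _ => mul_nonneg (sub_nonneg.mpr (hdd p).le) (by positivity))
          ⟨q, mem_univ q, mul_pos (sub_pos.mpr (hdd q)) (by positivity)⟩
    _ = ∑ p, (diagEntry A p).re * ‖x p‖ ^ (2 * (m + 1)) -
          ∑ p, rOff A p * ‖x p‖ ^ (2 * (m + 1)) := by
        simp only [sub_mul, sum_sub_distrib]
    _ ≤ ∑ p, (diagEntry A p).re * ‖x p‖ ^ (2 * (m + 1)) -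
          ∑ i, ∑ j, offDiagNorm A i j * ((∏ k, ‖x (i k)‖) * ∏ k, ‖x (j k)‖) :=
        sub_le_sub_left (sum_offDiagNorm_mul_prod_mul_prod_le hcps.norm_comp_perm_left
          hcps.1.norm_comm _) _
    _ ≤ (fpoly A x).re := sum_diag_sub_sum_offDiagNorm_le_re_fpoly A x
end
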